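/- For a connected graph G of order n ≥ 3 with minimum transmission Tr_min and Wiener index W(G), the distance Laplacian energy satisfies DLE(G) ≥ 8W(G)/n − 2n·Tr_min/(n−1). -/

import Mathlib

open Finset Matrix BigOperators

variable {V : Type*} [Fintype V] [DecidableEq V]

/-- The transmission of a vertex: the sum of distances to all other vertices. -/
noncomputable def transmission (G : SimpleGraph V) (v : V) : ℕ := ∑ u, G.dist v u

/-- The distance matrix of a graph. -/
noncomputable def distMatrix (G : SimpleGraph V) : Matrix V V ℝ :=
  fun u v => (G.dist u v : ℝ)

/-- The distance Laplacian matrix `Tr(G) - D(G)`. -/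
noncomputable def distLap (G : SimpleGraph V) : Matrix V V ℝ :=
  Matrix.diagonal (fun v => (transmission G v : ℝ)) - distMatrix G

/-- The Wiener index of a graph. -/
noncomputable def wiener (G : SimpleGraph V) : ℝ := (∑ v, (transmission G v : ℝ)) / 2

/-- `ρ` lists the eigenvalues of the (Hermitian) matrix `M` in nonincreasing order. -/
def IsSpectrum {n : ℕ} (M : Matrix (Fin n) (Fin n) ℝ) (ρ : Fin n → ℝ) : Prop :=
  Antitone ρ ∧ ∃ (hM : M.IsHermitian) (e : Fin n ≃ Fin n), ∀ i, ρ i = hM.eigenvalues (e i)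

/-- Distance Laplacian energy, given the eigenvalue list `ρ`. -/
noncomputable def DLEnergy {n : ℕ} (G : SimpleGraph (Fin n)) (ρ : Fin n → ℝ) : ℝ :=
  ∑ i, |ρ i - 2 * wiener G / n|

/-- The graph has diameter two. -/
def diamTwo (G : SimpleGraph V) : Prop :=
  (∀ u v, G.dist u v ≤ 2) ∧ ∃ u v, G.dist u v = 2

/-- The multiset of eigenvalues of a Hermitian matrix. -/
noncomputable def eigMultiset (M : Matrix V V ℝ) (hM : M.IsHermitian) : Multiset ℝ :=
  Finset.univ.val.map hM.eigenvalues

/-!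
The eigenvalues of `distLap G` sum to its trace `2 W`, so the deviations `ρ i - 2 W / n` sum to
zero and the energy is at least `-2` times the sum of any two of them; for the two smallest
eigenvalues this gives `DLE ≥ 8 W / n - 2 (ρ (n-2) + ρ (n-1))`. By the Ky Fan principle the sum of
the two smallest eigenvalues of a symmetric matrix is at most the sum of the Rayleigh quotients of
any two orthogonal vectors. For the all-ones vector, which `distLap G` kills, and `n e_v - 1`
with `v` of minimum transmission, that sum is `n Tr_min / (n - 1)`.
-/

namespace Matrix.IsHermitian

variable {ι : Type*} [Fintype ι] [DecidableEq ι] {M : Matrix ι ι ℝ} (hM : M.IsHermitian)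

local notation "U" => (hM.eigenvectorUnitary : Matrix ι ι ℝ)

lemma vecMul_eigenvectorUnitary (x : ι → ℝ) : x ᵥ* U = star U *ᵥ x := by
  rw [star_eq_conjTranspose, conjTranspose_eq_transpose_of_trivial, mulVec_transpose]

lemma dotProduct_star_eigenvectorUnitary_mulVec (x y : ι → ℝ) :
    (star U *ᵥ x) ⬝ᵥ (star U *ᵥ y) = x ⬝ᵥ y := by
  rw [← vecMul_eigenvectorUnitary, ← dotProduct_mulVec, mulVec_mulVec,
    mem_unitaryGroup_iff.mp hM.eigenvectorUnitary.2, one_mulVec]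

lemma dotProduct_mulVec_eq_sum_eigenvalues (x : ι → ℝ) :
    x ⬝ᵥ (M *ᵥ x) = ∑ j, hM.eigenvalues j * (star U *ᵥ x) j ^ 2 := by
  have hspec : M = U * diagonal (RCLike.ofReal ∘ hM.eigenvalues) * star U := hM.spectral_theorem
  conv_lhs => rw [hspec, ← mulVec_mulVec, ← mulVec_mulVec, dotProduct_mulVec,
    vecMul_eigenvectorUnitary]
  simp only [mulVec_diagonal, dotProduct, Function.comp_apply, RCLike.ofReal_real_eq_id, id]
  exact Finset.sum_congr rfl fun j _ => by ring

end Matrix.IsHermitian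

lemma sq_add_sq_le_one_of_orthonormal {ι : Type*} [Fintype ι] {a b : ι → ℝ}
    (ha : a ⬝ᵥ a = 1) (hb : b ⬝ᵥ b = 1) (hab : a ⬝ᵥ b = 0) (j : ι) :
    a j ^ 2 + b j ^ 2 ≤ 1 := by
  -- `p` is the projection of the `j`-th basis vector onto `span {a, b}`
  set p := a j • a + b j • b
  have hpj : p j = a j ^ 2 + b j ^ 2 := by simp [p, sq]
  have hpp : p ⬝ᵥ p = a j ^ 2 + b j ^ 2 := by
    simp only [p, add_dotProduct, dotProduct_add, smul_dotProduct, dotProduct_smul, ha, hb, hab,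
      dotProduct_comm b a, smul_eq_mul]
    ring
  have hle : p j ^ 2 ≤ p ⬝ᵥ p := by
    simpa only [dotProduct, sq] using
      Finset.single_le_sum (f := fun i => p i * p i) (fun i _ => mul_self_nonneg _) (mem_univ j)
  nlinarith [sq_nonneg (a j), sq_nonneg (b j)]

lemma Antitone.add_last_two_le_sum_mul {n : ℕ} (hn : 2 ≤ n) {ρ c : Fin n → ℝ} (hρ : Antitone ρ)
    (hc : ∀ i, 0 ≤ c i) (hc_last : c ⟨n - 1, by omega⟩ ≤ 1) (hc_sum : ∑ i, c i = 2) :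
    ρ ⟨n - 2, by omega⟩ + ρ ⟨n - 1, by omega⟩ ≤ ∑ i, ρ i * c i := by
  set i₁ : Fin n := ⟨n - 2, by omega⟩
  set i₀ : Fin n := ⟨n - 1, by omega⟩
  have hρ₀₁ : ρ i₀ ≤ ρ i₁ := hρ (Fin.mk_le_mk.mpr (by omega))
  -- all indices but the last are `≤ i₁`, so only the last weight can fall below `ρ i₁`
  have hpoint : ∀ i, ρ i₁ * c i + (ρ i₀ - ρ i₁) * (if i = i₀ then c i₀ else 0) ≤ ρ i * c i := by
    intro i
    split_ifs with h
    · subst h; linarith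
    · have : i ≤ i₁ := Fin.mk_le_mk.mpr (by have := Fin.val_ne_of_ne h; simp [i₀] at this; omega)
      nlinarith [hρ this, hc i]
  calc ρ i₁ + ρ i₀ ≤ ρ i₁ * 2 + (ρ i₀ - ρ i₁) * c i₀ := by nlinarith
    _ = ∑ i, (ρ i₁ * c i + (ρ i₀ - ρ i₁) * (if i = i₀ then c i₀ else 0)) := by
      rw [sum_add_distrib, ← mul_sum, ← mul_sum, hc_sum, sum_ite_eq' univ i₀, if_pos (mem_univ _)]
    _ ≤ ∑ i, ρ i * c i := sum_le_sum fun i _ => hpoint i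

lemma IsSpectrum.add_last_two_le {n : ℕ} (hn : 2 ≤ n) {M : Matrix (Fin n) (Fin n) ℝ}
    {ρ : Fin n → ℝ} (hρ : IsSpectrum M ρ) {x y : Fin n → ℝ}
    (hx : x ⬝ᵥ x = 1) (hy : y ⬝ᵥ y = 1) (hxy : x ⬝ᵥ y = 0) :
    ρ ⟨n - 2, by omega⟩ + ρ ⟨n - 1, by omega⟩ ≤ x ⬝ᵥ (M *ᵥ x) + y ⬝ᵥ (M *ᵥ y) := by
  obtain ⟨hanti, hM, e, he⟩ := hρ
  set a := star (hM.eigenvectorUnitary : Matrix (Fin n) (Fin n) ℝ) *ᵥ x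
  set b := star (hM.eigenvectorUnitary : Matrix (Fin n) (Fin n) ℝ) *ᵥ y
  have ha : a ⬝ᵥ a = 1 := by rw [hM.dotProduct_star_eigenvectorUnitary_mulVec, hx]
  have hb : b ⬝ᵥ b = 1 := by rw [hM.dotProduct_star_eigenvectorUnitary_mulVec, hy]
  have hab : a ⬝ᵥ b = 0 := by rw [hM.dotProduct_star_eigenvectorUnitary_mulVec, hxy]
  have hsum : ∑ i, (a (e i) ^ 2 + b (e i) ^ 2) = 2 := by
    rw [e.sum_comp (fun j => a j ^ 2 + b j ^ 2), sum_add_distrib]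
    simp only [dotProduct, ← sq] at ha hb
    rw [ha, hb]; norm_num
  calc ρ ⟨n - 2, _⟩ + ρ ⟨n - 1, _⟩ ≤ ∑ i, ρ i * (a (e i) ^ 2 + b (e i) ^ 2) :=
        hanti.add_last_two_le_sum_mul hn (fun i => by positivity)
          (sq_add_sq_le_one_of_orthonormal ha hb hab _) hsum
    _ = x ⬝ᵥ (M *ᵥ x) + y ⬝ᵥ (M *ᵥ y) := by
      simp only [he, hM.dotProduct_mulVec_eq_sum_eigenvalues, ← sum_add_distrib, mul_add]
      exact e.sum_comp (fun j => hM.eigenvalues j * a j ^ 2 + hM.eigenvalues j * b j ^ 2)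

lemma dotProduct_mulVec_inv_sqrt_smul {ι : Type*} [Fintype ι] {x : ι → ℝ} (hx : 0 < x ⬝ᵥ x)
    (M : Matrix ι ι ℝ) (y : ι → ℝ) :
    ((√(x ⬝ᵥ x))⁻¹ • x) ⬝ᵥ (M *ᵥ ((√(x ⬝ᵥ x))⁻¹ • y)) = x ⬝ᵥ (M *ᵥ y) / x ⬝ᵥ x := by
  rw [mulVec_smul, smul_dotProduct, dotProduct_smul, smul_eq_mul, smul_eq_mul, ← mul_assoc,
    ← mul_inv, Real.mul_self_sqrt hx.le, inv_mul_eq_div]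

lemma IsSpectrum.add_last_two_le_div {n : ℕ} (hn : 2 ≤ n) {M : Matrix (Fin n) (Fin n) ℝ}
    {ρ : Fin n → ℝ} (hρ : IsSpectrum M ρ) {x y : Fin n → ℝ}
    (hx : 0 < x ⬝ᵥ x) (hy : 0 < y ⬝ᵥ y) (hxy : x ⬝ᵥ y = 0) :
    ρ ⟨n - 2, by omega⟩ + ρ ⟨n - 1, by omega⟩ ≤
      x ⬝ᵥ (M *ᵥ x) / x ⬝ᵥ x + y ⬝ᵥ (M *ᵥ y) / y ⬝ᵥ y := by
  rw [← dotProduct_mulVec_inv_sqrt_smul hx, ← dotProduct_mulVec_inv_sqrt_smul hy]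
  refine hρ.add_last_two_le hn ?_ ?_ ?_
  · simpa [one_mulVec, div_self hx.ne'] using dotProduct_mulVec_inv_sqrt_smul hx 1 x
  · simpa [one_mulVec, div_self hy.ne'] using dotProduct_mulVec_inv_sqrt_smul hy 1 y
  · simp [hxy]

lemma IsSpectrum.sum_eq_trace {n : ℕ} {M : Matrix (Fin n) (Fin n) ℝ} {ρ : Fin n → ℝ}
    (hρ : IsSpectrum M ρ) : ∑ i, ρ i = M.trace := by
  obtain ⟨-, hM, e, he⟩ := hρ
  simp only [he, e.sum_comp hM.eigenvalues, hM.trace_eq_sum_eigenvalues, RCLike.ofReal_real_eq_id,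
    id]

lemma Matrix.IsSymm.dotProduct_mulVec_sub_smul_one {ι : Type*} [Fintype ι] {M : Matrix ι ι ℝ}
    (hM : M.IsSymm) (h1 : M *ᵥ 1 = 0) (x : ι → ℝ) (c : ℝ) :
    (x - c • 1) ⬝ᵥ (M *ᵥ (x - c • 1)) = x ⬝ᵥ (M *ᵥ x) := by
  have h1' : 1 ᵥ* M = 0 := by rw [← mulVec_transpose, hM.eq, h1]
  rw [mulVec_sub, mulVec_smul, h1, smul_zero, sub_zero, sub_dotProduct, smul_dotProduct,
    dotProduct_mulVec 1, h1', zero_dotProduct, smul_zero, sub_zero]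

lemma neg_two_mul_add_le_sum_abs {ι : Type*} [Fintype ι] [DecidableEq ι] {a : ι → ℝ}
    (ha : ∑ k, a k = 0) {i j : ι} (hij : i ≠ j) : -2 * (a i + a j) ≤ ∑ k, |a k| := by
  have hnonneg : ∀ k, 0 ≤ |a k| - a k := fun k => sub_nonneg.mpr (le_abs_self _)
  calc -2 * (a i + a j) ≤ (|a i| - a i) + (|a j| - a j) := by
        linarith [neg_abs_le (a i), neg_abs_le (a j)]
    _ = ∑ k ∈ {i, j}, (|a k| - a k) := (sum_pair (f := fun k => |a k| - a k) hij).symm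
    _ ≤ ∑ k, (|a k| - a k) := sum_le_sum_of_subset_of_nonneg (subset_univ _) fun k _ _ => hnonneg k
    _ = ∑ k, |a k| := by rw [sum_sub_distrib, ha, sub_zero]

section distLap

variable (G : SimpleGraph V)

lemma distLap_isSymm : (distLap G).IsSymm :=
  (isSymm_diagonal _).sub (IsSymm.ext fun u w => by simp [distMatrix, G.dist_comm])

lemma distLap_mulVec_one : distLap G *ᵥ 1 = 0 := by
  ext u
  simp only [distLap, sub_mulVec, mulVec_diagonal, Pi.sub_apply, Pi.one_apply, mul_one,
    transmission, Nat.cast_sum, Pi.zero_apply, sub_eq_zero]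
  simp [mulVec, dotProduct, distMatrix]

lemma distLap_apply_self (v : V) : distLap G v v = transmission G v := by
  simp [distLap, distMatrix]

lemma trace_distLap : (distLap G).trace = 2 * wiener G := by
  simp [trace, distLap_apply_self, wiener, mul_div_cancel₀]

end distLap

lemma IsSpectrum.add_last_two_le_transmission {n : ℕ} (hn : 2 ≤ n) {G : SimpleGraph (Fin n)}
    {ρ : Fin n → ℝ} (hρ : IsSpectrum (distLap G) ρ) (v : Fin n) :
    ρ ⟨n - 2, by omega⟩ + ρ ⟨n - 1, by omega⟩ ≤ n * transmission G v / (n - 1) := by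
  have hn' : (2 : ℝ) ≤ n := by exact_mod_cast hn
  -- test vectors: the all-ones vector, which `distLap G` kills, and `n e_v - 1` orthogonal to it
  set y : Fin n → ℝ := Pi.single v (n : ℝ) - (1 : ℝ) • 1
  have hones : (1 : Fin n → ℝ) ⬝ᵥ 1 = n := by simp
  have hsingle : (1 : Fin n → ℝ) ⬝ᵥ Pi.single v (n : ℝ) = n := by simp
  have hy : y ⬝ᵥ y = n * (n - 1) := by
    simp only [y, one_smul, sub_dotProduct, dotProduct_sub, hones, hsingle,
      dotProduct_comm _ (1 : Fin n → ℝ), single_dotProduct, Pi.single_eq_same]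
    ring
  have hxy : (1 : Fin n → ℝ) ⬝ᵥ y = 0 := by simp [y, hsingle, hones]
  have hqx : (1 : Fin n → ℝ) ⬝ᵥ (distLap G *ᵥ 1) = 0 := by simp [distLap_mulVec_one]
  have hqy : y ⬝ᵥ (distLap G *ᵥ y) = n ^ 2 * transmission G v := by
    rw [(distLap_isSymm G).dotProduct_mulVec_sub_smul_one (distLap_mulVec_one G),
      single_dotProduct, mulVec, dotProduct_single, distLap_apply_self]
    ring
  calc ρ ⟨n - 2, _⟩ + ρ ⟨n - 1, _⟩
      ≤ (1 : Fin n → ℝ) ⬝ᵥ (distLap G *ᵥ 1) / (1 : Fin n → ℝ) ⬝ᵥ 1 +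
          y ⬝ᵥ (distLap G *ᵥ y) / y ⬝ᵥ y :=
        hρ.add_last_two_le_div hn (by rw [hones]; linarith) (by rw [hy]; nlinarith) hxy
    _ = n * transmission G v / (n - 1) := by
      rw [hqx, hqy, hy, zero_div, zero_add]
      field_simp

lemma IsSpectrum.sub_add_last_two_le_DLEnergy {n : ℕ} (hn : 2 ≤ n) {G : SimpleGraph (Fin n)}
    {ρ : Fin n → ℝ} (hρ : IsSpectrum (distLap G) ρ) :
    8 * wiener G / n - 2 * (ρ ⟨n - 2, by omega⟩ + ρ ⟨n - 1, by omega⟩) ≤ DLEnergy G ρ := by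
  have hn' : (n : ℝ) ≠ 0 := by positivity
  have hcentered : ∑ i, (ρ i - 2 * wiener G / n) = 0 := by
    rw [sum_sub_distrib, hρ.sum_eq_trace, trace_distLap]
    simp [mul_div_cancel₀ _ hn']
  have hne : (⟨n - 2, by omega⟩ : Fin n) ≠ ⟨n - 1, by omega⟩ := by simp; omega
  have := neg_two_mul_add_le_sum_abs hcentered hne
  have h8 : 8 * wiener G / n = 4 * (2 * wiener G / n) := by ring
  rw [DLEnergy, h8]
  linarith

theorem stmt6 {n : ℕ} (hn : 3 ≤ n) (G : SimpleGraph (Fin n))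
    (ρ : Fin n → ℝ) (hρ : IsSpectrum (distLap G) ρ)
    (Trmin : ℕ)
    (hTr : Trmin = Finset.univ.inf' ⟨⟨0, by omega⟩, Finset.mem_univ _⟩ (transmission G)) :
    8 * wiener G / n - 2 * (n : ℝ) * (Trmin : ℝ) / ((n : ℝ) - 1) ≤ DLEnergy G ρ := by
  obtain ⟨v, -, hv⟩ := exists_mem_eq_inf' ⟨⟨0, by omega⟩, mem_univ _⟩ (transmission G)
  have hspectral := hρ.add_last_two_le_transmission (by omega) v
  calc 8 * wiener G / n - 2 * (n : ℝ) * (Trmin : ℝ) / ((n : ℝ) - 1)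
      = 8 * wiener G / n - 2 * (n * transmission G v / (n - 1)) := by rw [hTr, hv]; ring
    _ ≤ 8 * wiener G / n - 2 * (ρ ⟨n - 2, by omega⟩ + ρ ⟨n - 1, by omega⟩) := by linarith
    _ ≤ DLEnergy G ρ := hρ.sub_add_last_two_le_DLEnergy (by omega)
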